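/- Let (u_θ)_{θ∈I} be a smooth family of model eigenfunctions of H(θ) with eigenvalues σ(θ). Then for every θ ∈ I: ∫_{ℝ²₊} t V_θ u_θ² ds dt = C(θ)/2 and ∫_{ℝ²₊} s V_θ u_θ² ds dt = −S(θ)/2, where C(θ) = cos θ · σ(θ) − sin θ · σ'(θ) and S(θ) = sin θ · σ(θ) + cos θ · σ'(θ). -/

import Mathlib

/-!
Write `I_t = ∫ t V u²` and `I_s = ∫ s V u²`. As `V = t cos θ - s sin θ`, we have
`∫ V² u² = cos θ I_t - sin θ I_s` and `∫ ∂_θ(V²) u² = -2 (sin θ I_t + cos θ I_s)`, so the claim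
is a rotation of the two identities `∫ V² u² = σ/2` (virial) and `∫ ∂_θ(V²) u² = σ'`
(Feynman–Hellmann). Both come from Green's identity `∫ (H v) u = ∫ v (H u)` for Neumann functions:
for the virial identity take `v = (s∂_s + t∂_t) u`, where `H v = σ v + 2σ u - 4V² u` because `V` is
homogeneous of degree one; for Feynman–Hellmann take `v = ∂_θ u`, where
`H v = σ' u + σ v - ∂_θ(V²) u` by differentiating the eigenvalue equation in `θ`.
-/

open Real MeasureTheory Set

noncomputable section

/-- Partial derivative with respect to the first variable. -/
def pd1 (u : ℝ → ℝ → ℝ) : ℝ → ℝ → ℝ := fun s t => deriv (fun x => u x t) s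

/-- Partial derivative with respect to the second variable. -/
def pd2 (u : ℝ → ℝ → ℝ) : ℝ → ℝ → ℝ := fun s t => deriv (fun y => u s y) t

/-- The potential `V_θ(s,t) = t cos θ − s sin θ`. -/
def Vpot (θ : ℝ) : ℝ → ℝ → ℝ := fun s t => t * Real.cos θ - s * Real.sin θ

/-- The operator `H(θ) = −∂_s² − ∂_t² + V_θ²` applied to `u`. -/
def Hop (θ : ℝ) (u : ℝ → ℝ → ℝ) : ℝ → ℝ → ℝ :=
  fun s t => - pd1 (pd1 u) s t - pd2 (pd2 u) s t + (Vpot θ s t)^2 * u s t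

/-- Integral over the half-plane `{t > 0}` with respect to `ds dt`. -/
def intHalf (f : ℝ → ℝ → ℝ) : ℝ := ∫ s : ℝ, ∫ t in Set.Ioi (0:ℝ), f s t

/-- Schwartz-class on the closed half-plane: all iterated partial derivatives decay
faster than any power of `|s| + t`. -/
def SchwartzHalf (u : ℝ → ℝ → ℝ) : Prop :=
  ∀ k l n : ℕ, ∃ C : ℝ, ∀ s t : ℝ, 0 ≤ t →
    |pd1^[k] (pd2^[l] u) s t| ≤ C * (1 + |s| + t) ^ (-(n:ℝ))

/-- A model eigenfunction of `H(θ)` with eigenvalue `σ`: smooth up to the boundary,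
Schwartz-class, `L²`-normalized, Neumann boundary condition, and `H(θ)u = σu` on `{t ≥ 0}`. -/
structure IsModelEigen (θ : ℝ) (u : ℝ → ℝ → ℝ) (σ : ℝ) : Prop where
  smooth : ∀ n : ℕ, ContDiff ℝ n (fun p : ℝ × ℝ => u p.1 p.2)
  schwartz : SchwartzHalf u
  normalized : intHalf (fun s t => (u s t)^2) = 1
  neumann : ∀ s : ℝ, pd2 u s 0 = 0
  eigen : ∀ s t : ℝ, 0 ≤ t → Hop θ u s t = σ * u s t

/-- Partial derivative in the parameter `θ` of a family. -/
def pdθ (u : ℝ → ℝ → ℝ → ℝ) : ℝ → ℝ → ℝ → ℝ := fun θ s t => deriv (fun x => u x s t) θ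

/-- A smooth family of model eigenfunctions of `H(θ)` with eigenvalues `σ(θ)`,
parametrized by the open interval `Ioo a b ⊆ (0, π/2)`: the map `(θ,s,t) ↦ u θ s t`
is smooth, all its partial derivatives are Schwartz-class in `(s,t)` locally uniformly
in `θ`, `σ` is smooth, and each `u θ` is a model eigenfunction of `H(θ)`. -/
structure IsSmoothFamily (a b : ℝ) (u : ℝ → ℝ → ℝ → ℝ) (σ : ℝ → ℝ) : Prop where
  sub : Set.Ioo a b ⊆ Set.Ioo 0 (π/2)
  smooth : ∀ n : ℕ, ContDiffOn ℝ n (fun p : ℝ × ℝ × ℝ => u p.1 p.2.1 p.2.2)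
      (Set.Ioo a b ×ˢ (Set.univ : Set (ℝ × ℝ)))
  sigma_smooth : ∀ n : ℕ, ContDiffOn ℝ n σ (Set.Ioo a b)
  schwartz : ∀ θ ∈ Set.Ioo a b, ∀ m k l n : ℕ, ∃ ε > 0, ∃ C : ℝ,
      ∀ θ' ∈ Set.Ioo a b, |θ' - θ| < ε → ∀ s t : ℝ, 0 ≤ t →
      |pd1^[k] (pd2^[l] (pdθ^[m] u θ')) s t| ≤ C * (1 + |s| + t) ^ (-(n:ℝ))
  eigen : ∀ θ ∈ Set.Ioo a b, IsModelEigen θ (u θ) (σ θ)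

open Filter Topology Function
open scoped ContDiff

section DirectionalDerivative

variable {E F : Type*} [NormedAddCommGroup E] [NormedSpace ℝ E]
  [NormedAddCommGroup F] [NormedSpace ℝ F]

def dirDeriv (v : E) (G : E → F) : E → F := fun p => fderiv ℝ G p v

lemma contDiffOn_dirDeriv {G : E → F} {Ω : Set E} (hG : ContDiffOn ℝ ∞ G Ω) (hΩ : IsOpen Ω)
    (v : E) : ContDiffOn ℝ ∞ (dirDeriv v G) Ω :=
  (hG.fderiv_of_isOpen hΩ (by simp)).clm_apply contDiffOn_const

lemma dirDeriv_comm {G : E → F} {p : E} (hG : ContDiffAt ℝ 2 G p) (v w : E) :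
    dirDeriv v (dirDeriv w G) p = dirDeriv w (dirDeriv v G) p := by
  have hdiff : DifferentiableAt ℝ (fderiv ℝ G) p :=
    (hG.fderiv_right (m := 1) le_rfl).differentiableAt one_ne_zero
  have hflip : ∀ z : E, fderiv ℝ (fun q => fderiv ℝ G q z) p = (fderiv ℝ (fderiv ℝ G) p).flip z :=
    fun z => by simpa using fderiv_clm_apply hdiff (differentiableAt_const z)
  change fderiv ℝ (fun q => fderiv ℝ G q w) p v = fderiv ℝ (fun q => fderiv ℝ G q v) p w
  rw [hflip, hflip]
  exact hG.isSymmSndFDerivAt (by simp [minSmoothness_of_isRCLikeNormedField]) v w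

lemma DifferentiableAt.hasDerivAt_comp {G : E → F} {γ : ℝ → E} {v : E} {x : ℝ}
    (hG : DifferentiableAt ℝ G (γ x)) (hγ : HasDerivAt γ v x) :
    HasDerivAt (fun y => G (γ y)) (dirDeriv v G (γ x)) x :=
  hG.hasFDerivAt.comp_hasDerivAt x hγ

lemma dirDeriv_eq_of_eqOn {G H : E → F} {Ω : Set E} (hGH : EqOn G H Ω) (hΩ : IsOpen Ω) {p : E}
    (hp : p ∈ Ω) (v : E) : dirDeriv v G p = dirDeriv v H p := by
  simp only [dirDeriv, (eventuallyEq_of_mem (hΩ.mem_nhds hp) hGH).fderiv_eq]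

lemma ContDiffOn.dirDeriv_comm_of_eqOn {G A B : E → F} {Ω : Set E} (hG : ContDiffOn ℝ ∞ G Ω)
    (hΩ : IsOpen Ω) {v w : E} (hA : EqOn A (dirDeriv w G) Ω) (hB : EqOn B (dirDeriv v G) Ω)
    {p : E} (hp : p ∈ Ω) : dirDeriv v A p = dirDeriv w B p :=
  calc dirDeriv v A p = dirDeriv v (dirDeriv w G) p := dirDeriv_eq_of_eqOn hA hΩ hp v
    _ = dirDeriv w (dirDeriv v G) p :=
      dirDeriv_comm ((hG.contDiffAt (hΩ.mem_nhds hp)).of_le ENat.LEInfty.out) v w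
    _ = dirDeriv w B p := (dirDeriv_eq_of_eqOn hB hΩ hp w).symm

end DirectionalDerivative

section PartialDerivatives

variable {f : ℝ → ℝ → ℝ}

lemma hasDerivAt_dirDeriv_fst (hf : Differentiable ℝ (uncurry f)) (s t : ℝ) :
    HasDerivAt (fun x => f x t) (dirDeriv (1, 0) (uncurry f) (s, t)) s :=
  (hf (s, t)).hasDerivAt_comp (γ := fun x => (x, t))
    ((hasDerivAt_id s).prodMk (hasDerivAt_const s t))

lemma hasDerivAt_dirDeriv_snd (hf : Differentiable ℝ (uncurry f)) (s t : ℝ) :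
    HasDerivAt (fun y => f s y) (dirDeriv (0, 1) (uncurry f) (s, t)) t :=
  (hf (s, t)).hasDerivAt_comp (γ := fun y => (s, y))
    ((hasDerivAt_const t s).prodMk (hasDerivAt_id t))

lemma uncurry_pd1_eq_dirDeriv (hf : Differentiable ℝ (uncurry f)) :
    uncurry (pd1 f) = dirDeriv (1, 0) (uncurry f) :=
  funext fun p => (hasDerivAt_dirDeriv_fst hf p.1 p.2).deriv

lemma uncurry_pd2_eq_dirDeriv (hf : Differentiable ℝ (uncurry f)) :
    uncurry (pd2 f) = dirDeriv (0, 1) (uncurry f) :=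
  funext fun p => (hasDerivAt_dirDeriv_snd hf p.1 p.2).deriv

namespace ContDiff

lemma hasDerivAt_pd1 (hf : ContDiff ℝ ∞ (uncurry f)) (s t : ℝ) :
    HasDerivAt (fun x => f x t) (pd1 f s t) s :=
  (hasDerivAt_dirDeriv_fst (hf.differentiable (by simp)) s t).differentiableAt.hasDerivAt

lemma hasDerivAt_pd2 (hf : ContDiff ℝ ∞ (uncurry f)) (s t : ℝ) :
    HasDerivAt (fun y => f s y) (pd2 f s t) t :=
  (hasDerivAt_dirDeriv_snd (hf.differentiable (by simp)) s t).differentiableAt.hasDerivAt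

lemma uncurry_pd1 (hf : ContDiff ℝ ∞ (uncurry f)) : ContDiff ℝ ∞ (uncurry (pd1 f)) := by
  rw [uncurry_pd1_eq_dirDeriv (hf.differentiable (by simp))]
  exact contDiffOn_univ.1 (contDiffOn_dirDeriv (contDiffOn_univ.2 hf) isOpen_univ _)

lemma uncurry_pd2 (hf : ContDiff ℝ ∞ (uncurry f)) : ContDiff ℝ ∞ (uncurry (pd2 f)) := by
  rw [uncurry_pd2_eq_dirDeriv (hf.differentiable (by simp))]
  exact contDiffOn_univ.1 (contDiffOn_dirDeriv (contDiffOn_univ.2 hf) isOpen_univ _)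

lemma pd1_pd2_comm (hf : ContDiff ℝ ∞ (uncurry f)) : pd1 (pd2 f) = pd2 (pd1 f) := by
  have hd := hf.differentiable (by simp)
  funext s t
  change uncurry (pd1 (pd2 f)) (s, t) = uncurry (pd2 (pd1 f)) (s, t)
  rw [uncurry_pd1_eq_dirDeriv (hf.uncurry_pd2.differentiable (by simp)),
    uncurry_pd2_eq_dirDeriv (hf.uncurry_pd1.differentiable (by simp)),
    uncurry_pd1_eq_dirDeriv hd, uncurry_pd2_eq_dirDeriv hd]
  exact dirDeriv_comm (hf.contDiffAt.of_le ENat.LEInfty.out) _ _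

end ContDiff

end PartialDerivatives

section SmoothFamily

def uncurry3 (u : ℝ → ℝ → ℝ → ℝ) : ℝ × ℝ × ℝ → ℝ := fun p => u p.1 p.2.1 p.2.2

def JointlySmoothOn (I : Set ℝ) (u : ℝ → ℝ → ℝ → ℝ) : Prop :=
  ContDiffOn ℝ ∞ (uncurry3 u) (I ×ˢ univ)

variable {I : Set ℝ} {u : ℝ → ℝ → ℝ → ℝ} {θ : ℝ}

namespace JointlySmoothOn

lemma differentiableAt (hu : JointlySmoothOn I u) (hI : IsOpen I) {p : ℝ × ℝ × ℝ}
    (hp : p ∈ I ×ˢ univ) : DifferentiableAt ℝ (uncurry3 u) p :=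
  (hu.contDiffAt ((hI.prod isOpen_univ).mem_nhds hp)).differentiableAt (by simp)

lemma eqOn_pdθ (hu : JointlySmoothOn I u) (hI : IsOpen I) :
    EqOn (uncurry3 (pdθ u)) (dirDeriv (1, 0, 0) (uncurry3 u)) (I ×ˢ univ) := fun p hp =>
  ((hu.differentiableAt hI hp).hasDerivAt_comp (γ := fun x => (x, p.2.1, p.2.2))
    ((hasDerivAt_id p.1).prodMk (hasDerivAt_const p.1 p.2))).deriv

lemma eqOn_pd1 (hu : JointlySmoothOn I u) (hI : IsOpen I) :
    EqOn (uncurry3 fun θ => pd1 (u θ)) (dirDeriv (0, 1, 0) (uncurry3 u)) (I ×ˢ univ) :=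
  fun p hp =>
  ((hu.differentiableAt hI hp).hasDerivAt_comp (γ := fun x => (p.1, x, p.2.2))
    ((hasDerivAt_const p.2.1 p.1).prodMk
      ((hasDerivAt_id p.2.1).prodMk (hasDerivAt_const p.2.1 p.2.2)))).deriv

lemma eqOn_pd2 (hu : JointlySmoothOn I u) (hI : IsOpen I) :
    EqOn (uncurry3 fun θ => pd2 (u θ)) (dirDeriv (0, 0, 1) (uncurry3 u)) (I ×ˢ univ) :=
  fun p hp =>
  ((hu.differentiableAt hI hp).hasDerivAt_comp (γ := fun y => (p.1, p.2.1, y))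
    ((hasDerivAt_const p.2.2 p.1).prodMk
      ((hasDerivAt_const p.2.2 p.2.1).prodMk (hasDerivAt_id p.2.2)))).deriv

end JointlySmoothOn

lemma jointlySmoothOn_pdθ (hu : JointlySmoothOn I u) (hI : IsOpen I) :
    JointlySmoothOn I (pdθ u) :=
  (contDiffOn_dirDeriv hu (hI.prod isOpen_univ) _).congr (hu.eqOn_pdθ hI)

lemma jointlySmoothOn_pd1 (hu : JointlySmoothOn I u) (hI : IsOpen I) :
    JointlySmoothOn I (fun θ => pd1 (u θ)) :=
  (contDiffOn_dirDeriv hu (hI.prod isOpen_univ) _).congr (hu.eqOn_pd1 hI)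

lemma jointlySmoothOn_pd2 (hu : JointlySmoothOn I u) (hI : IsOpen I) :
    JointlySmoothOn I (fun θ => pd2 (u θ)) :=
  (contDiffOn_dirDeriv hu (hI.prod isOpen_univ) _).congr (hu.eqOn_pd2 hI)

namespace JointlySmoothOn

lemma contDiff_uncurry (hu : JointlySmoothOn I u) (hθ : θ ∈ I) : ContDiff ℝ ∞ (uncurry (u θ)) :=
  contDiffOn_univ.1 <| hu.comp (contDiff_const.prodMk contDiff_id).contDiffOn
    fun _ _ => ⟨hθ, trivial⟩

lemma hasDerivAt_pdθ (hu : JointlySmoothOn I u) (hI : IsOpen I) (hθ : θ ∈ I) (s t : ℝ) :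
    HasDerivAt (fun θ' => u θ' s t) (pdθ u θ s t) θ :=
  ((hu.differentiableAt hI (p := (θ, s, t)) ⟨hθ, trivial⟩).hasDerivAt_comp
    (γ := fun x => (x, s, t))
    ((hasDerivAt_id θ).prodMk (hasDerivAt_const θ (s, t)))).differentiableAt.hasDerivAt

lemma pdθ_pd1 (hu : JointlySmoothOn I u) (hI : IsOpen I) (hθ : θ ∈ I) :
    pdθ (fun θ => pd1 (u θ)) θ = pd1 (pdθ u θ) := by
  funext s t
  have hp : (θ, s, t) ∈ I ×ˢ univ := ⟨hθ, trivial⟩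
  exact ((jointlySmoothOn_pd1 hu hI).eqOn_pdθ hI hp).trans <|
    (hu.dirDeriv_comm_of_eqOn (hI.prod isOpen_univ) (hu.eqOn_pd1 hI) (hu.eqOn_pdθ hI) hp).trans
      ((jointlySmoothOn_pdθ hu hI).eqOn_pd1 hI hp).symm

lemma pdθ_pd2 (hu : JointlySmoothOn I u) (hI : IsOpen I) (hθ : θ ∈ I) :
    pdθ (fun θ => pd2 (u θ)) θ = pd2 (pdθ u θ) := by
  funext s t
  have hp : (θ, s, t) ∈ I ×ˢ univ := ⟨hθ, trivial⟩
  exact ((jointlySmoothOn_pd2 hu hI).eqOn_pdθ hI hp).trans <|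
    (hu.dirDeriv_comm_of_eqOn (hI.prod isOpen_univ) (hu.eqOn_pd2 hI) (hu.eqOn_pdθ hI) hp).trans
      ((jointlySmoothOn_pdθ hu hI).eqOn_pd2 hI hp).symm

end JointlySmoothOn

end SmoothFamily

section Decay

def HalfPlaneDecay (r : ℝ) (f : ℝ → ℝ → ℝ) : Prop :=
  ∃ C, 0 ≤ C ∧ ∀ s t : ℝ, 0 ≤ t → |f s t| ≤ C * (1 + |s| + t) ^ (-r)

variable {r r' : ℝ} {f g : ℝ → ℝ → ℝ}

lemma one_add_abs_add_pos (s : ℝ) {t : ℝ} (ht : 0 ≤ t) : 0 < 1 + |s| + t := by positivity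

lemma rpow_neg_one_add_abs_add_le_left (s : ℝ) {t : ℝ} (ht : 0 ≤ t) (hr : 0 ≤ r) :
    (1 + |s| + t) ^ (-r) ≤ (1 + |s|) ^ (-r) :=
  rpow_le_rpow_of_nonpos (by positivity) (by linarith) (by linarith)

lemma rpow_neg_one_add_abs_add_le_right (s : ℝ) {t : ℝ} (ht : 0 ≤ t) (hr : 0 ≤ r) :
    (1 + |s| + t) ^ (-r) ≤ (1 + t) ^ (-r) :=
  rpow_le_rpow_of_nonpos (by positivity) (by linarith [abs_nonneg s]) (by linarith)

namespace HalfPlaneDecay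

lemma mono (hf : HalfPlaneDecay r f) (h : r' ≤ r) : HalfPlaneDecay r' f := by
  obtain ⟨C, hC, hf⟩ := hf
  refine ⟨C, hC, fun s t ht => (hf s t ht).trans (mul_le_mul_of_nonneg_left ?_ hC)⟩
  exact rpow_le_rpow_of_exponent_le (by linarith [abs_nonneg s]) (by linarith)

lemma mul (hf : HalfPlaneDecay r f) (hg : HalfPlaneDecay r' g) :
    HalfPlaneDecay (r + r') (fun s t => f s t * g s t) := by
  obtain ⟨C, hC, hf⟩ := hf
  obtain ⟨C', hC', hg⟩ := hg
  refine ⟨C * C', by positivity, fun s t ht => ?_⟩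
  rw [abs_mul, neg_add, rpow_add (one_add_abs_add_pos s ht)]
  calc |f s t| * |g s t| ≤ (C * (1 + |s| + t) ^ (-r)) * (C' * (1 + |s| + t) ^ (-r')) :=
        mul_le_mul (hf s t ht) (hg s t ht) (abs_nonneg _) ((abs_nonneg _).trans (hf s t ht))
    _ = _ := by ring

lemma add (hf : HalfPlaneDecay r f) (hg : HalfPlaneDecay r g) :
    HalfPlaneDecay r (fun s t => f s t + g s t) := by
  obtain ⟨C, hC, hf⟩ := hf
  obtain ⟨C', hC', hg⟩ := hg
  refine ⟨C + C', by positivity, fun s t ht => ?_⟩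
  linarith [abs_add_le (f s t) (g s t), hf s t ht, hg s t ht]

lemma sub (hf : HalfPlaneDecay r f) (hg : HalfPlaneDecay r g) :
    HalfPlaneDecay r (fun s t => f s t - g s t) := by
  obtain ⟨C, hC, hf⟩ := hf
  obtain ⟨C', hC', hg⟩ := hg
  refine ⟨C + C', by positivity, fun s t ht => ?_⟩
  linarith [abs_sub (f s t) (g s t), hf s t ht, hg s t ht]

lemma const_mul (hf : HalfPlaneDecay r f) (c : ℝ) :
    HalfPlaneDecay r (fun s t => c * f s t) := by
  obtain ⟨C, hC, hf⟩ := hf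
  refine ⟨|c| * C, by positivity, fun s t ht => ?_⟩
  rw [abs_mul, mul_assoc]
  exact mul_le_mul_of_nonneg_left (hf s t ht) (abs_nonneg c)

end HalfPlaneDecay

lemma halfPlaneDecay_one : HalfPlaneDecay 0 fun _ _ => 1 :=
  ⟨1, zero_le_one, fun s t _ => by simp⟩

lemma halfPlaneDecay_of_abs_le (hf : ∀ s t : ℝ, 0 ≤ t → |f s t| ≤ 1 + |s| + t) :
    HalfPlaneDecay (-1) f :=
  ⟨1, zero_le_one, fun s t ht => by simpa using hf s t ht⟩

lemma halfPlaneDecay_fst : HalfPlaneDecay (-1) (fun s _ => s) :=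
  halfPlaneDecay_of_abs_le fun s t ht => by linarith

lemma halfPlaneDecay_snd : HalfPlaneDecay (-1) (fun _ t => t) :=
  halfPlaneDecay_of_abs_le fun s t ht => by rw [abs_of_nonneg ht]; linarith [abs_nonneg s]

lemma halfPlaneDecay_Vpot (θ : ℝ) : HalfPlaneDecay (-1) (Vpot θ) :=
  halfPlaneDecay_of_abs_le fun s t ht => by
    have hs : |s * sin θ| ≤ |s| := by
      rw [abs_mul]; exact mul_le_of_le_one_right (abs_nonneg s) (abs_sin_le_one θ)
    have ht' : |t * cos θ| ≤ t := by
      rw [abs_mul, abs_of_nonneg ht]; exact mul_le_of_le_one_right ht (abs_cos_le_one θ)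
    show |t * cos θ - s * sin θ| ≤ _
    linarith [abs_sub (t * cos θ) (s * sin θ)]

lemma SchwartzHalf.halfPlaneDecay (hf : SchwartzHalf f) (k l : ℕ) (r : ℝ) :
    HalfPlaneDecay r (pd1^[k] (pd2^[l] f)) := by
  obtain ⟨C, hC⟩ := hf k l ⌈r⌉₊
  refine HalfPlaneDecay.mono ⟨max C 0, le_max_right _ _, fun s t ht => (hC s t ht).trans ?_⟩
    (Nat.le_ceil r)
  exact mul_le_mul_of_nonneg_right (le_max_left _ _) (by positivity)

end Decay

section Integrability

def halfPlaneMeasure : Measure (ℝ × ℝ) := volume.prod (volume.restrict (Ioi 0))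

lemma ae_halfPlaneMeasure : ∀ᵐ p ∂halfPlaneMeasure, 0 < p.2 := by
  have : halfPlaneMeasure = (volume.prod volume).restrict (univ ×ˢ Ioi (0 : ℝ)) := by
    rw [← Measure.prod_restrict, Measure.restrict_univ]; rfl
  rw [this]
  filter_upwards [ae_restrict_mem (MeasurableSet.univ.prod measurableSet_Ioi)] with p hp
  exact hp.2

variable {r : ℝ} {f g : ℝ → ℝ → ℝ}

lemma intHalf_eq_integral (hf : Integrable (uncurry f) halfPlaneMeasure) :
    intHalf f = ∫ p, uncurry f p ∂halfPlaneMeasure :=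
  (integral_prod _ hf).symm

lemma intHalf_congr (hfg : ∀ s t : ℝ, 0 < t → f s t = g s t) : intHalf f = intHalf g := by
  unfold intHalf
  congr 1 with s
  exact setIntegral_congr_fun measurableSet_Ioi fun t ht => hfg s t ht

lemma intHalf_neg : intHalf (fun s t => -f s t) = -intHalf f := by
  simp only [intHalf, integral_neg]

lemma intHalf_const_mul (c : ℝ) : intHalf (fun s t => c * f s t) = c * intHalf f := by
  simp only [intHalf, integral_const_mul]

lemma intHalf_add (hf : Integrable (uncurry f) halfPlaneMeasure)
    (hg : Integrable (uncurry g) halfPlaneMeasure) :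
    intHalf (fun s t => f s t + g s t) = intHalf f + intHalf g := by
  rw [intHalf_eq_integral hf, intHalf_eq_integral hg,
    intHalf_eq_integral (f := fun s t => f s t + g s t) (hf.add hg)]
  exact integral_add hf hg

lemma intHalf_linear_comb {h : ℝ → ℝ → ℝ} (hf : Integrable (uncurry f) halfPlaneMeasure)
    (hg : Integrable (uncurry g) halfPlaneMeasure) (hh : Integrable (uncurry h) halfPlaneMeasure)
    (a b c : ℝ) : intHalf (fun s t => a * f s t + b * g s t + c * h s t) =
      a * intHalf f + b * intHalf g + c * intHalf h := by
  rw [intHalf_add (f := fun s t => a * f s t + b * g s t) (g := fun s t => c * h s t)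
    ((hf.const_mul a).add (hg.const_mul b)) (hh.const_mul c),
    intHalf_add (f := fun s t => a * f s t) (g := fun s t => b * g s t) (hf.const_mul a)
      (hg.const_mul b), intHalf_const_mul, intHalf_const_mul, intHalf_const_mul]

namespace HalfPlaneDecay

lemma integrable (hf : HalfPlaneDecay r f) (hr : 2 < r) (hc : Continuous (uncurry f)) :
    Integrable (uncurry f) halfPlaneMeasure := by
  obtain ⟨C, hC, hf⟩ := hf
  have hr' : 1 < r / 2 := by linarith
  have hint : Integrable (fun p : ℝ × ℝ => C * ((1 + ‖p.1‖) ^ (-(r / 2)) *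
      (1 + ‖p.2‖) ^ (-(r / 2)))) halfPlaneMeasure :=
    ((integrable_one_add_norm (by simpa using hr')).mul_prod
      (integrable_one_add_norm (by simpa using hr')).restrict).const_mul C
  refine hint.mono' hc.aestronglyMeasurable ?_
  filter_upwards [ae_halfPlaneMeasure] with p hp
  have h2 := hp.le
  rw [Real.norm_eq_abs, Real.norm_eq_abs, Real.norm_eq_abs, abs_of_nonneg h2]
  refine (hf p.1 p.2 h2).trans (mul_le_mul_of_nonneg_left ?_ hC)
  rw [show -r = -(r / 2) + -(r / 2) by ring, rpow_add (one_add_abs_add_pos _ h2)]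
  exact mul_le_mul (rpow_neg_one_add_abs_add_le_left _ h2 (by linarith))
    (rpow_neg_one_add_abs_add_le_right _ h2 (by linarith)) (by positivity) (by positivity)

lemma integrableOn_Ioi (hf : HalfPlaneDecay r f) (hr : 1 < r) (hc : Continuous (uncurry f))
    (s : ℝ) : IntegrableOn (fun t => f s t) (Ioi 0) := by
  obtain ⟨C, hC, hf⟩ := hf
  refine (((integrable_one_add_norm (by simpa using hr)).const_mul C).restrict).mono'
    (hc.comp (continuous_const.prodMk continuous_id)).aestronglyMeasurable ?_
  filter_upwards [ae_restrict_mem measurableSet_Ioi] with t ht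
  rw [Real.norm_eq_abs, Real.norm_eq_abs, abs_of_pos (a := t) ht]
  exact (hf s t ht.le).trans (mul_le_mul_of_nonneg_left
    (rpow_neg_one_add_abs_add_le_right s ht.le (by linarith)) hC)

lemma integrable_line (hf : HalfPlaneDecay r f) (hr : 1 < r) (hc : Continuous (uncurry f))
    {t : ℝ} (ht : 0 ≤ t) : Integrable fun s => f s t := by
  obtain ⟨C, hC, hf⟩ := hf
  refine ((integrable_one_add_norm (by simpa using hr)).const_mul C).mono'
    (hc.comp (continuous_id.prodMk continuous_const)).aestronglyMeasurable
    (Eventually.of_forall fun s => ?_)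
  rw [Real.norm_eq_abs, Real.norm_eq_abs]
  exact (hf s t ht).trans (mul_le_mul_of_nonneg_left
    (rpow_neg_one_add_abs_add_le_left s ht (by linarith)) hC)

lemma tendsto_atTop (hf : HalfPlaneDecay r f) (hr : 0 < r) (s : ℝ) :
    Tendsto (fun t => f s t) atTop (𝓝 0) := by
  obtain ⟨C, hC, hf⟩ := hf
  refine squeeze_zero_norm' ?_ (mul_zero C ▸ ((tendsto_rpow_neg_atTop hr).comp
    (tendsto_atTop_add_const_left _ 1 tendsto_id)).const_mul C)
  filter_upwards [eventually_ge_atTop 0] with t ht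
  exact (hf s t ht).trans (mul_le_mul_of_nonneg_left
    (rpow_neg_one_add_abs_add_le_right s ht hr.le) hC)

lemma tendsto_line (hf : HalfPlaneDecay r f) (hr : 0 < r) {t : ℝ} (ht : 0 ≤ t) {l : Filter ℝ}
    (hl : Tendsto (fun s => |s|) l atTop) : Tendsto (fun s => f s t) l (𝓝 0) := by
  obtain ⟨C, hC, hf⟩ := hf
  refine squeeze_zero_norm' ?_ (mul_zero C ▸ ((tendsto_rpow_neg_atTop hr).comp
    (tendsto_atTop_add_const_left _ 1 hl)).const_mul C)
  exact Eventually.of_forall fun s => (hf s t ht).trans (mul_le_mul_of_nonneg_left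
    (rpow_neg_one_add_abs_add_le_left s ht hr.le) hC)

end HalfPlaneDecay

end Integrability

section Green

lemma hasDerivAt_wronskian {φ φ' φ'' ψ ψ' ψ'' : ℝ → ℝ} {x : ℝ}
    (hφ : HasDerivAt φ (φ' x) x) (hφ' : HasDerivAt φ' (φ'' x) x)
    (hψ : HasDerivAt ψ (ψ' x) x) (hψ' : HasDerivAt ψ' (ψ'' x) x) :
    HasDerivAt (fun y => φ' y * ψ y - φ y * ψ' y) (φ'' x * ψ x - φ x * ψ'' x) x :=
  ((hφ'.fun_mul hψ).fun_sub (hφ.fun_mul hψ')).congr_deriv (by ring)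

/-- Decay of order `2` makes every product of two such functions integrable on the half-plane. -/
structure GreenAdmissible (v : ℝ → ℝ → ℝ) : Prop where
  smooth : ContDiff ℝ ∞ (uncurry v)
  decay : HalfPlaneDecay 2 v
  decay_pd1 : HalfPlaneDecay 2 (pd1 v)
  decay_pd2 : HalfPlaneDecay 2 (pd2 v)
  decay_pd11 : HalfPlaneDecay 2 (pd1 (pd1 v))
  decay_pd22 : HalfPlaneDecay 2 (pd2 (pd2 v))
  neumann : ∀ s, pd2 v s 0 = 0

namespace GreenAdmissible

variable {v w : ℝ → ℝ → ℝ}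

lemma continuous_pd11_mul_sub (hv : GreenAdmissible v) (hw : GreenAdmissible w) :
    Continuous (uncurry fun s t => pd1 (pd1 v) s t * w s t - v s t * pd1 (pd1 w) s t) :=
  (hv.smooth.uncurry_pd1.uncurry_pd1.continuous.mul hw.smooth.continuous).sub
    (hv.smooth.continuous.mul hw.smooth.uncurry_pd1.uncurry_pd1.continuous)

lemma continuous_pd22_mul_sub (hv : GreenAdmissible v) (hw : GreenAdmissible w) :
    Continuous (uncurry fun s t => pd2 (pd2 v) s t * w s t - v s t * pd2 (pd2 w) s t) :=
  (hv.smooth.uncurry_pd2.uncurry_pd2.continuous.mul hw.smooth.continuous).sub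
    (hv.smooth.continuous.mul hw.smooth.uncurry_pd2.uncurry_pd2.continuous)

lemma decay_pd11_mul_sub (hv : GreenAdmissible v) (hw : GreenAdmissible w) :
    HalfPlaneDecay 4 fun s t => pd1 (pd1 v) s t * w s t - v s t * pd1 (pd1 w) s t :=
  ((hv.decay_pd11.mul hw.decay).sub (hv.decay.mul hw.decay_pd11)).mono (by norm_num)

lemma decay_pd22_mul_sub (hv : GreenAdmissible v) (hw : GreenAdmissible w) :
    HalfPlaneDecay 4 fun s t => pd2 (pd2 v) s t * w s t - v s t * pd2 (pd2 w) s t :=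
  ((hv.decay_pd22.mul hw.decay).sub (hv.decay.mul hw.decay_pd22)).mono (by norm_num)

lemma integral_pd11_mul_sub (hv : GreenAdmissible v) (hw : GreenAdmissible w) {t : ℝ}
    (ht : 0 ≤ t) : ∫ s, (pd1 (pd1 v) s t * w s t - v s t * pd1 (pd1 w) s t) = 0 := by
  have hv1 := hv.smooth.uncurry_pd1
  have hw1 := hw.smooth.uncurry_pd1
  have hW : ∀ s, HasDerivAt (fun x => pd1 v x t * w x t - v x t * pd1 w x t)
      (pd1 (pd1 v) s t * w s t - v s t * pd1 (pd1 w) s t) s := fun s =>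
    hasDerivAt_wronskian (φ' := fun x => pd1 v x t) (ψ' := fun x => pd1 w x t)
      (hv.smooth.hasDerivAt_pd1 s t) (hv1.hasDerivAt_pd1 s t)
      (hw.smooth.hasDerivAt_pd1 s t) (hw1.hasDerivAt_pd1 s t)
  have hWdecay := (hv.decay_pd1.mul hw.decay).sub (hv.decay.mul hw.decay_pd1)
  rw [integral_of_hasDerivAt_of_tendsto hW
    ((hv.decay_pd11_mul_sub hw).integrable_line (by norm_num) (hv.continuous_pd11_mul_sub hw) ht)
    (hWdecay.tendsto_line (by norm_num) ht tendsto_abs_atBot_atTop)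
    (hWdecay.tendsto_line (by norm_num) ht tendsto_abs_atTop_atTop), sub_self]

lemma integral_Ioi_pd22_mul_sub (hv : GreenAdmissible v) (hw : GreenAdmissible w) (s : ℝ) :
    ∫ t in Ioi 0, (pd2 (pd2 v) s t * w s t - v s t * pd2 (pd2 w) s t) = 0 := by
  have hv2 := hv.smooth.uncurry_pd2
  have hw2 := hw.smooth.uncurry_pd2
  have hW : ∀ t, HasDerivAt (fun y => pd2 v s y * w s y - v s y * pd2 w s y)
      (pd2 (pd2 v) s t * w s t - v s t * pd2 (pd2 w) s t) t := fun t =>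
    hasDerivAt_wronskian (hv.smooth.hasDerivAt_pd2 s t) (hv2.hasDerivAt_pd2 s t)
      (hw.smooth.hasDerivAt_pd2 s t) (hw2.hasDerivAt_pd2 s t)
  have hWdecay := (hv.decay_pd2.mul hw.decay).sub (hv.decay.mul hw.decay_pd2)
  rw [integral_Ioi_of_hasDerivAt_of_tendsto (hW 0).continuousAt.continuousWithinAt
    (fun t _ => hW t)
    ((hv.decay_pd22_mul_sub hw).integrableOn_Ioi (by norm_num) (hv.continuous_pd22_mul_sub hw) s)
    (hWdecay.tendsto_atTop (by norm_num) s), hv.neumann, hw.neumann]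
  ring

lemma intHalf_pd11_mul_sub (hv : GreenAdmissible v) (hw : GreenAdmissible w) :
    intHalf (fun s t => pd1 (pd1 v) s t * w s t - v s t * pd1 (pd1 w) s t) = 0 := by
  have hint := (hv.decay_pd11_mul_sub hw).integrable (by norm_num) (hv.continuous_pd11_mul_sub hw)
  rw [intHalf_eq_integral hint, halfPlaneMeasure, integral_prod_symm _ hint]
  refine integral_eq_zero_of_ae ?_
  filter_upwards [ae_restrict_mem measurableSet_Ioi] with t ht
  exact hv.integral_pd11_mul_sub hw (le_of_lt ht)

lemma intHalf_pd22_mul_sub (hv : GreenAdmissible v) (hw : GreenAdmissible w) :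
    intHalf (fun s t => pd2 (pd2 v) s t * w s t - v s t * pd2 (pd2 w) s t) = 0 := by
  simp only [intHalf, hv.integral_Ioi_pd22_mul_sub hw, integral_zero]

/-- Green's identity. The `V²` terms cancel pointwise; of the two integrations by parts, the one in
`t` has no boundary term thanks to the Neumann condition. -/
lemma intHalf_Hop_mul_sub (hv : GreenAdmissible v) (hw : GreenAdmissible w) (θ : ℝ) :
    intHalf (fun s t => Hop θ v s t * w s t - v s t * Hop θ w s t) = 0 := by
  rw [intHalf_congr (g := fun s t => -((pd1 (pd1 v) s t * w s t - v s t * pd1 (pd1 w) s t) +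
      (pd2 (pd2 v) s t * w s t - v s t * pd2 (pd2 w) s t))) fun s t _ => by simp only [Hop]; ring,
    intHalf_neg, intHalf_add ((hv.decay_pd11_mul_sub hw).integrable (by norm_num)
      (hv.continuous_pd11_mul_sub hw)) ((hv.decay_pd22_mul_sub hw).integrable (by norm_num)
      (hv.continuous_pd22_mul_sub hw)), hv.intHalf_pd11_mul_sub hw, hv.intHalf_pd22_mul_sub hw]
  simp

end GreenAdmissible

end Green

section Virial

def eulerOp (U : ℝ → ℝ → ℝ) : ℝ → ℝ → ℝ := fun s t => s * pd1 U s t + t * pd2 U s t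

variable {U : ℝ → ℝ → ℝ} {θ σ : ℝ}

namespace ContDiff

lemma uncurry_eulerOp (hU : ContDiff ℝ ∞ (uncurry U)) : ContDiff ℝ ∞ (uncurry (eulerOp U)) :=
  (contDiff_fst.mul hU.uncurry_pd1).add (contDiff_snd.mul hU.uncurry_pd2)

lemma hasDerivAt_eulerOp_fst (hU : ContDiff ℝ ∞ (uncurry U)) (s t : ℝ) :
    HasDerivAt (fun x => eulerOp U x t) (pd1 U s t + eulerOp (pd1 U) s t) s := by
  have h := ((hasDerivAt_id s).mul (hU.uncurry_pd1.hasDerivAt_pd1 s t)).add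
    ((hU.uncurry_pd2.hasDerivAt_pd1 s t).const_mul t)
  rw [hU.pd1_pd2_comm] at h
  exact h.congr_deriv (by simp only [eulerOp, id]; ring)

lemma hasDerivAt_eulerOp_snd (hU : ContDiff ℝ ∞ (uncurry U)) (s t : ℝ) :
    HasDerivAt (fun y => eulerOp U s y) (pd2 U s t + eulerOp (pd2 U) s t) t := by
  have h := ((hU.uncurry_pd1.hasDerivAt_pd2 s t).const_mul s).add
    ((hasDerivAt_id t).mul (hU.uncurry_pd2.hasDerivAt_pd2 s t))
  rw [← hU.pd1_pd2_comm] at h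
  exact h.congr_deriv (by simp only [eulerOp, id]; ring)

lemma pd1_eulerOp (hU : ContDiff ℝ ∞ (uncurry U)) :
    pd1 (eulerOp U) = fun s t => pd1 U s t + eulerOp (pd1 U) s t :=
  funext fun s => funext fun t => (hU.hasDerivAt_eulerOp_fst s t).deriv

lemma pd2_eulerOp (hU : ContDiff ℝ ∞ (uncurry U)) :
    pd2 (eulerOp U) = fun s t => pd2 U s t + eulerOp (pd2 U) s t :=
  funext fun s => funext fun t => (hU.hasDerivAt_eulerOp_snd s t).deriv

lemma pd11_eulerOp (hU : ContDiff ℝ ∞ (uncurry U)) :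
    pd1 (pd1 (eulerOp U)) = fun s t => 2 * pd1 (pd1 U) s t + eulerOp (pd1 (pd1 U)) s t := by
  rw [hU.pd1_eulerOp]
  funext s t
  exact (((hU.uncurry_pd1.hasDerivAt_pd1 s t).add
    (hU.uncurry_pd1.hasDerivAt_eulerOp_fst s t)).congr_deriv (by ring)).deriv

lemma pd22_eulerOp (hU : ContDiff ℝ ∞ (uncurry U)) :
    pd2 (pd2 (eulerOp U)) = fun s t => 2 * pd2 (pd2 U) s t + eulerOp (pd2 (pd2 U)) s t := by
  rw [hU.pd2_eulerOp]
  funext s t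
  exact (((hU.uncurry_pd2.hasDerivAt_pd2 s t).add
    (hU.uncurry_pd2.hasDerivAt_eulerOp_snd s t)).congr_deriv (by ring)).deriv

lemma hasDerivAt_Hop_fst (hU : ContDiff ℝ ∞ (uncurry U)) (θ s t : ℝ) :
    HasDerivAt (fun x => Hop θ U x t) (-pd1 (pd1 (pd1 U)) s t - pd1 (pd2 (pd2 U)) s t
      + (-2 * Real.sin θ * Vpot θ s t * U s t + Vpot θ s t ^ 2 * pd1 U s t)) s := by
  have hV : HasDerivAt (fun x => Vpot θ x t) (-Real.sin θ) s :=
    ((hasDerivAt_const s (t * Real.cos θ)).fun_sub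
      ((hasDerivAt_id' s).mul_const (Real.sin θ))).congr_deriv (by ring)
  exact (((hU.uncurry_pd1.uncurry_pd1.hasDerivAt_pd1 s t).neg.sub
    (hU.uncurry_pd2.uncurry_pd2.hasDerivAt_pd1 s t)).add
    ((hV.fun_pow 2).fun_mul (hU.hasDerivAt_pd1 s t))).congr_deriv (by ring)

lemma hasDerivAt_Hop_snd (hU : ContDiff ℝ ∞ (uncurry U)) (θ s t : ℝ) :
    HasDerivAt (fun y => Hop θ U s y) (-pd2 (pd1 (pd1 U)) s t - pd2 (pd2 (pd2 U)) s t
      + (2 * Real.cos θ * Vpot θ s t * U s t + Vpot θ s t ^ 2 * pd2 U s t)) t := by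
  have hV : HasDerivAt (fun y => Vpot θ s y) (Real.cos θ) t :=
    (((hasDerivAt_id' t).mul_const (Real.cos θ)).fun_sub
      (hasDerivAt_const t (s * Real.sin θ))).congr_deriv (by ring)
  exact (((hU.uncurry_pd1.uncurry_pd1.hasDerivAt_pd2 s t).neg.sub
    (hU.uncurry_pd2.uncurry_pd2.hasDerivAt_pd2 s t)).add
    ((hV.fun_pow 2).fun_mul (hU.hasDerivAt_pd2 s t))).congr_deriv (by ring)

end ContDiff

lemma HalfPlaneDecay.eulerOp {r : ℝ} (h1 : HalfPlaneDecay r (pd1 U))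
    (h2 : HalfPlaneDecay r (pd2 U)) :
    HalfPlaneDecay (r - 1) (eulerOp U) :=
  ((halfPlaneDecay_fst.mul h1).add (halfPlaneDecay_snd.mul h2)).mono (by linarith)

lemma IsModelEigen.greenAdmissible (me : IsModelEigen θ U σ) : GreenAdmissible U :=
  ⟨contDiff_infty.2 me.smooth, me.schwartz.halfPlaneDecay 0 0 2, me.schwartz.halfPlaneDecay 1 0 2,
    me.schwartz.halfPlaneDecay 0 1 2, me.schwartz.halfPlaneDecay 2 0 2,
    me.schwartz.halfPlaneDecay 0 2 2, me.neumann⟩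

lemma IsModelEigen.greenAdmissible_eulerOp (me : IsModelEigen θ U σ) :
    GreenAdmissible (eulerOp U) := by
  have hU : ContDiff ℝ ∞ (uncurry U) := contDiff_infty.2 me.smooth
  have hS := me.schwartz.halfPlaneDecay
  have d21 : HalfPlaneDecay 3 (pd2 (pd1 U)) := hU.pd1_pd2_comm ▸ hS 1 1 3
  have d211 : HalfPlaneDecay 3 (pd2 (pd1 (pd1 U))) := by
    rw [← hU.uncurry_pd1.pd1_pd2_comm, ← hU.pd1_pd2_comm]; exact hS 2 1 3
  refine ⟨hU.uncurry_eulerOp, ?_, ?_, ?_, ?_, ?_, fun s => ?_⟩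
  · exact (HalfPlaneDecay.eulerOp (hS 1 0 3) (hS 0 1 3)).mono (by norm_num)
  · rw [hU.pd1_eulerOp]
    exact (hS 1 0 2).add ((HalfPlaneDecay.eulerOp (hS 2 0 3) d21).mono (by norm_num))
  · rw [hU.pd2_eulerOp]
    exact (hS 0 1 2).add ((HalfPlaneDecay.eulerOp (hS 1 1 3) (hS 0 2 3)).mono (by norm_num))
  · rw [hU.pd11_eulerOp]
    exact ((hS 2 0 2).const_mul 2).add ((HalfPlaneDecay.eulerOp (hS 3 0 3) d211).mono (by norm_num))
  · rw [hU.pd22_eulerOp]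
    exact ((hS 0 2 2).const_mul 2).add
      ((HalfPlaneDecay.eulerOp (hS 1 2 3) (hS 0 3 3)).mono (by norm_num))
  · have h12 : pd1 (pd2 U) s 0 = 0 := by
      simp only [pd1, show (fun x => pd2 U x 0) = fun _ => 0 from funext me.neumann, deriv_const]
    simp only [hU.pd2_eulerOp, eulerOp, me.neumann, h12]
    ring

/-- The commutator `[H(θ), s∂_s + t∂_t] = -2Δ - 2V²`, as `V` is homogeneous of degree one. -/
lemma IsModelEigen.Hop_eulerOp (me : IsModelEigen θ U σ) {s t : ℝ} (ht : 0 < t) :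
    Hop θ (eulerOp U) s t = σ * eulerOp U s t + 2 * σ * U s t - 4 * Vpot θ s t ^ 2 * U s t := by
  have hU : ContDiff ℝ ∞ (uncurry U) := contDiff_infty.2 me.smooth
  have hds : pd1 (pd1 (pd1 U)) s t + pd1 (pd2 (pd2 U)) s t =
      -2 * Real.sin θ * Vpot θ s t * U s t + Vpot θ s t ^ 2 * pd1 U s t - σ * pd1 U s t := by
    have := (hU.hasDerivAt_Hop_fst θ s t).unique <| ((hU.hasDerivAt_pd1 s t).const_mul σ)
      |>.congr_of_eventuallyEq (Eventually.of_forall fun x => me.eigen x t ht.le)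
    linarith
  have hdt : pd2 (pd1 (pd1 U)) s t + pd2 (pd2 (pd2 U)) s t =
      2 * Real.cos θ * Vpot θ s t * U s t + Vpot θ s t ^ 2 * pd2 U s t - σ * pd2 U s t := by
    have := (hU.hasDerivAt_Hop_snd θ s t).unique <| ((hU.hasDerivAt_pd2 s t).const_mul σ)
      |>.congr_of_eventuallyEq (eventually_gt_nhds ht |>.mono fun y hy => me.eigen s y hy.le)
    linarith
  have h0 := me.eigen s t ht.le
  have hV : Vpot θ s t = t * Real.cos θ - s * Real.sin θ := rfl
  simp only [Hop, hU.pd11_eulerOp, hU.pd22_eulerOp, eulerOp] at h0 ⊢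
  linear_combination (-s) * hds - t * hdt + 2 * h0 + 2 * Vpot θ s t * U s t * hV

lemma continuous_uncurry_Vpot (θ : ℝ) : Continuous (uncurry (Vpot θ)) := by
  simp only [Vpot, uncurry_def]; fun_prop

lemma IsModelEigen.integrable_mul_sq (me : IsModelEigen θ U σ) {g : ℝ → ℝ → ℝ}
    (hg : HalfPlaneDecay (-2) g) (hgc : Continuous (uncurry g)) :
    Integrable (uncurry fun s t => g s t * U s t ^ 2) halfPlaneMeasure := by
  have hU : HalfPlaneDecay 3 U := me.schwartz.halfPlaneDecay 0 0 3
  refine HalfPlaneDecay.integrable (r := 4) ?_ (by norm_num)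
    (hgc.mul ((contDiff_infty.2 me.smooth).continuous.pow 2))
  simpa only [sq] using (hg.mul (hU.mul hU)).mono (by norm_num)

lemma IsModelEigen.integrable_sq (me : IsModelEigen θ U σ) :
    Integrable (uncurry fun s t => U s t ^ 2) halfPlaneMeasure := by
  simpa using me.integrable_mul_sq (halfPlaneDecay_one.mono (by norm_num)) continuous_const

lemma IsModelEigen.integrable_snd_mul_Vpot_mul_sq (me : IsModelEigen θ U σ) (θ' : ℝ) :
    Integrable (uncurry fun s t => t * Vpot θ' s t * U s t ^ 2) halfPlaneMeasure :=
  me.integrable_mul_sq ((halfPlaneDecay_snd.mul (halfPlaneDecay_Vpot θ')).mono (by norm_num))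
    (continuous_snd.mul (continuous_uncurry_Vpot θ'))

lemma IsModelEigen.integrable_fst_mul_Vpot_mul_sq (me : IsModelEigen θ U σ) (θ' : ℝ) :
    Integrable (uncurry fun s t => s * Vpot θ' s t * U s t ^ 2) halfPlaneMeasure :=
  me.integrable_mul_sq ((halfPlaneDecay_fst.mul (halfPlaneDecay_Vpot θ')).mono (by norm_num))
    (continuous_fst.mul (continuous_uncurry_Vpot θ'))

/-- The virial identity `∫ V² u² = σ/2`, from Green's identity for `u` and `(s∂_s + t∂_t)u`. -/
lemma IsModelEigen.virial (me : IsModelEigen θ U σ) :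
    Real.cos θ * intHalf (fun s t => t * Vpot θ s t * U s t ^ 2)
      - Real.sin θ * intHalf (fun s t => s * Vpot θ s t * U s t ^ 2) = σ / 2 := by
  have hG := me.greenAdmissible_eulerOp.intHalf_Hop_mul_sub me.greenAdmissible θ
  rw [intHalf_congr (g := fun s t => 2 * σ * U s t ^ 2
      + (-4 * Real.cos θ) * (t * Vpot θ s t * U s t ^ 2)
      + (4 * Real.sin θ) * (s * Vpot θ s t * U s t ^ 2)) fun s t ht => by
        rw [me.Hop_eulerOp ht, me.eigen s t ht.le]; simp only [Vpot]; ring,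
    intHalf_linear_comb me.integrable_sq (me.integrable_snd_mul_Vpot_mul_sq θ)
      (me.integrable_fst_mul_Vpot_mul_sq θ), me.normalized] at hG
  linarith

end Virial

section FeynmanHellmann

variable {a b : ℝ} {u : ℝ → ℝ → ℝ → ℝ} {σ : ℝ → ℝ} {θ : ℝ}

lemma hasDerivAt_Vpot_param (θ s t : ℝ) :
    HasDerivAt (fun θ' => Vpot θ' s t) (-(t * Real.sin θ + s * Real.cos θ)) θ :=
  (((hasDerivAt_cos θ).const_mul t).fun_sub ((hasDerivAt_sin θ).const_mul s)).congr_deriv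
    (by ring)

lemma JointlySmoothOn.hasDerivAt_Hop {I : Set ℝ} (hu : JointlySmoothOn I u) (hI : IsOpen I)
    (hθ : θ ∈ I) (s t : ℝ) :
    HasDerivAt (fun θ' => Hop θ' (u θ') s t) (Hop θ (pdθ u θ) s t
      - 2 * Vpot θ s t * (t * Real.sin θ + s * Real.cos θ) * u θ s t) θ := by
  have h11 : HasDerivAt (fun θ' => pd1 (pd1 (u θ')) s t) (pd1 (pd1 (pdθ u θ)) s t) θ := by
    have := (jointlySmoothOn_pd1 (jointlySmoothOn_pd1 hu hI) hI).hasDerivAt_pdθ hI hθ s t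
    rwa [(jointlySmoothOn_pd1 hu hI).pdθ_pd1 hI hθ, hu.pdθ_pd1 hI hθ] at this
  have h22 : HasDerivAt (fun θ' => pd2 (pd2 (u θ')) s t) (pd2 (pd2 (pdθ u θ)) s t) θ := by
    have := (jointlySmoothOn_pd2 (jointlySmoothOn_pd2 hu hI) hI).hasDerivAt_pdθ hI hθ s t
    rwa [(jointlySmoothOn_pd2 hu hI).pdθ_pd2 hI hθ, hu.pdθ_pd2 hI hθ] at this
  exact ((h11.neg.sub h22).add (((hasDerivAt_Vpot_param θ s t).fun_pow 2).fun_mul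
    (hu.hasDerivAt_pdθ hI hθ s t))).congr_deriv (by simp only [Hop]; ring)

namespace IsSmoothFamily

lemma jointlySmoothOn (h : IsSmoothFamily a b u σ) : JointlySmoothOn (Ioo a b) u :=
  contDiffOn_infty.2 h.smooth

/-- Differentiate `H(θ) u_θ = σ(θ) u_θ` in `θ`. -/
lemma Hop_pdθ (h : IsSmoothFamily a b u σ) (hθ : θ ∈ Ioo a b) {s t : ℝ} (ht : 0 ≤ t) :
    Hop θ (pdθ u θ) s t = deriv σ θ * u θ s t + σ θ * pdθ u θ s t
      + 2 * Vpot θ s t * (t * Real.sin θ + s * Real.cos θ) * u θ s t := by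
  have hσ : HasDerivAt σ (deriv σ θ) θ :=
    ((h.sigma_smooth 1).differentiableOn one_ne_zero θ hθ).differentiableAt
      (isOpen_Ioo.mem_nhds hθ) |>.hasDerivAt
  have := (h.jointlySmoothOn.hasDerivAt_Hop isOpen_Ioo hθ s t).unique <|
    (hσ.mul (h.jointlySmoothOn.hasDerivAt_pdθ isOpen_Ioo hθ s t)).congr_of_eventuallyEq <|
      eventually_of_mem (isOpen_Ioo.mem_nhds hθ) fun θ' hθ' => (h.eigen θ' hθ').eigen s t ht
  linarith

lemma schwartz_pdθ (h : IsSmoothFamily a b u σ) (hθ : θ ∈ Ioo a b) : SchwartzHalf (pdθ u θ) :=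
  fun k l n => by
    obtain ⟨ε, hε, C, hC⟩ := h.schwartz θ hθ 1 k l n
    exact ⟨C, hC θ hθ (by simpa using hε)⟩

lemma greenAdmissible_pdθ (h : IsSmoothFamily a b u σ) (hθ : θ ∈ Ioo a b) :
    GreenAdmissible (pdθ u θ) := by
  have hS := (h.schwartz_pdθ hθ).halfPlaneDecay
  refine ⟨(jointlySmoothOn_pdθ h.jointlySmoothOn isOpen_Ioo).contDiff_uncurry hθ,
    hS 0 0 2, hS 1 0 2, hS 0 1 2, hS 2 0 2, hS 0 2 2, fun s => ?_⟩
  rw [← h.jointlySmoothOn.pdθ_pd2 isOpen_Ioo hθ]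
  exact (EventuallyEq.deriv_eq (eventually_of_mem (isOpen_Ioo.mem_nhds hθ)
    fun θ' hθ' => (h.eigen θ' hθ').neumann s)).trans (deriv_const θ 0)

/-- The Feynman–Hellmann formula `σ' = ∫ ∂_θ(V²) u²`, from Green's identity applied to `u` and
`∂_θ u`. -/
lemma feynman_hellmann (h : IsSmoothFamily a b u σ) (hθ : θ ∈ Ioo a b) :
    Real.sin θ * intHalf (fun s t => t * Vpot θ s t * u θ s t ^ 2)
      + Real.cos θ * intHalf (fun s t => s * Vpot θ s t * u θ s t ^ 2) = -deriv σ θ / 2 := by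
  have me := h.eigen θ hθ
  have hG := (h.greenAdmissible_pdθ hθ).intHalf_Hop_mul_sub me.greenAdmissible θ
  rw [intHalf_congr (g := fun s t => deriv σ θ * u θ s t ^ 2
      + (2 * Real.sin θ) * (t * Vpot θ s t * u θ s t ^ 2)
      + (2 * Real.cos θ) * (s * Vpot θ s t * u θ s t ^ 2)) fun s t ht => by
        rw [h.Hop_pdθ hθ ht.le, me.eigen s t ht.le]; simp only [Vpot]; ring,
    intHalf_linear_comb me.integrable_sq (me.integrable_snd_mul_Vpot_mul_sq θ)
      (me.integrable_fst_mul_Vpot_mul_sq θ), me.normalized] at hG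
  linarith

end IsSmoothFamily

end FeynmanHellmann

/-- `∫ t V_θ u_θ² = C(θ)/2` and `∫ s V_θ u_θ² = −S(θ)/2`, where
`C(θ) = cos θ σ(θ) − sin θ σ'(θ)` and `S(θ) = sin θ σ(θ) + cos θ σ'(θ)`. -/
theorem tV_sV_identities (a b : ℝ) (u : ℝ → ℝ → ℝ → ℝ) (σ : ℝ → ℝ)
    (h : IsSmoothFamily a b u σ) (θ : ℝ) (hθ : θ ∈ Set.Ioo a b)
    (Cθ Sθ : ℝ)
    (hC : Cθ = Real.cos θ * σ θ - Real.sin θ * deriv σ θ)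
    (hS : Sθ = Real.sin θ * σ θ + Real.cos θ * deriv σ θ) :
    intHalf (fun s t => t * Vpot θ s t * (u θ s t)^2) = Cθ / 2 ∧
    intHalf (fun s t => s * Vpot θ s t * (u θ s t)^2) = - Sθ / 2 := by
  have hV := (h.eigen θ hθ).virial
  have hF := h.feynman_hellmann hθ
  have hpyth := sin_sq_add_cos_sq θ
  subst hC hS
  constructor
  · linear_combination Real.cos θ * hV + Real.sin θ * hF
      - intHalf (fun s t => t * Vpot θ s t * (u θ s t)^2) * hpyth
  · linear_combination -Real.sin θ * hV + Real.cos θ * hF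
      - intHalf (fun s t => s * Vpot θ s t * (u θ s t)^2) * hpyth
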